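/- arXiv:2205.14527 — 6 statements merged into one kernel-verified Lean document; each statement's English description precedes it below -/
import Mathlib

section
/- For every real number α with -1 < α < 1, the improper integral ∫₀^∞ t^α / (t² + 1) dt converges and equals π / (2 cos(απ/2)). -/
/-!
Substituting `x = t² / (t² + 1)`, which maps `(0, ∞)` onto `(0, 1)`, turns the integral into half
the Beta integral `B(u, 1 - u)` with `u = (1 + α) / 2`. Euler's reflection formula gives
`B(u, 1 - u) = Γ(u) Γ(1 - u) = π / sin (π u)`, and `sin (π u) = cos (α π / 2)`.
-/

open Real MeasureTheory Set

lemma ofReal_rpow_mul_one_sub_rpow {x : ℝ} (hx : x ∈ uIcc (0 : ℝ) 1) (u v : ℝ) :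
    ((x ^ (u - 1) * (1 - x) ^ (v - 1) : ℝ) : ℂ)
      = (x : ℂ) ^ ((u : ℂ) - 1) * (1 - (x : ℂ)) ^ ((v : ℂ) - 1) := by
  rw [uIcc_of_le zero_le_one] at hx
  push_cast [Complex.ofReal_cpow hx.1, Complex.ofReal_cpow (sub_nonneg.2 hx.2)]
  rfl

lemma intervalIntegrable_rpow_mul_one_sub_rpow {u v : ℝ} (hu : 0 < u) (hv : 0 < v) :
    IntervalIntegrable (fun x : ℝ => x ^ (u - 1) * (1 - x) ^ (v - 1)) volume 0 1 := by
  have hC := Complex.betaIntegral_convergent (u := u) (v := v) (by simpa) (by simpa)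
  rw [← intervalIntegrable_congr fun x hx =>
    ofReal_rpow_mul_one_sub_rpow (uIoc_subset_uIcc hx) u v] at hC
  exact ⟨by simpa [IntegrableOn] using hC.1.re, by simp⟩

theorem integral_rpow_mul_one_sub_rpow {u v : ℝ} (hu : 0 < u) (hv : 0 < v) :
    ∫ x in (0 : ℝ)..1, x ^ (u - 1) * (1 - x) ^ (v - 1) = Gamma u * Gamma v / Gamma (u + v) := by
  have hB := Complex.Gamma_mul_Gamma_eq_betaIntegral (s := u) (t := v) (by simpa) (by simpa)
  rw [eq_div_iff (Gamma_pos_of_pos (add_pos hu hv)).ne', ← Complex.ofReal_inj]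
  rw [Complex.betaIntegral, ← intervalIntegral.integral_congr
    (fun x hx => ofReal_rpow_mul_one_sub_rpow hx u v), intervalIntegral.integral_ofReal] at hB
  push_cast [← Complex.Gamma_ofReal]
  rw [hB]; ring

lemma hasDerivAt_sq_div_sq_add_one (t : ℝ) :
    HasDerivAt (fun t : ℝ => t ^ 2 / (t ^ 2 + 1)) (2 * t / (t ^ 2 + 1) ^ 2) t := by
  have hpos : t ^ 2 + 1 ≠ 0 := by positivity
  refine ((hasDerivAt_pow 2 t).div ((hasDerivAt_pow 2 t).add_const 1) hpos).congr_deriv ?_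
  field_simp
  ring

lemma strictMonoOn_sq_div_sq_add_one :
    StrictMonoOn (fun t : ℝ => t ^ 2 / (t ^ 2 + 1)) (Ici 0) := by
  intro x hx y hy hxy
  have hxy2 : x ^ 2 < y ^ 2 := pow_lt_pow_left₀ hxy hx two_ne_zero
  dsimp only
  rw [div_lt_div_iff₀ (by positivity) (by positivity)]
  nlinarith

lemma image_sq_div_sq_add_one_Ioi : (fun t : ℝ => t ^ 2 / (t ^ 2 + 1)) '' Ioi 0 = Ioo 0 1 := by
  ext x
  constructor
  · rintro ⟨t, ht, rfl⟩
    have ht : 0 < t := ht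
    exact ⟨by positivity, (div_lt_one (by positivity)).2 (by linarith)⟩
  · rintro ⟨hx0, hx1⟩
    have hs : 0 < x / (1 - x) := div_pos hx0 (sub_pos.2 hx1)
    refine ⟨√(x / (1 - x)), sqrt_pos.2 hs, ?_⟩
    have hx1' : 1 - x ≠ 0 := (sub_pos.2 hx1).ne'
    simp only [sq_sqrt hs.le]
    field_simp
    ring

lemma abs_deriv_sq_div_sq_add_one {t : ℝ} (ht : t ∈ Ioi 0) :
    |2 * t / (t ^ 2 + 1) ^ 2| = 2 * t / (t ^ 2 + 1) ^ 2 :=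
  abs_of_pos (by have : 0 < t := ht; positivity)

theorem integrableOn_Ioo_iff_comp_sq_div_sq_add_one (F : ℝ → ℝ) :
    IntegrableOn F (Ioo 0 1) ↔
      IntegrableOn (fun t => 2 * t / (t ^ 2 + 1) ^ 2 * F (t ^ 2 / (t ^ 2 + 1))) (Ioi 0) := by
  rw [← image_sq_div_sq_add_one_Ioi, integrableOn_image_iff_integrableOn_abs_deriv_smul
    measurableSet_Ioi (fun t _ => (hasDerivAt_sq_div_sq_add_one t).hasDerivWithinAt)
    (strictMonoOn_sq_div_sq_add_one.injOn.mono Ioi_subset_Ici_self)]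
  refine integrableOn_congr_fun (fun t ht => ?_) measurableSet_Ioi
  simp only [abs_deriv_sq_div_sq_add_one ht, smul_eq_mul]

theorem integral_Ioo_eq_integral_comp_sq_div_sq_add_one (F : ℝ → ℝ) :
    ∫ x in Ioo 0 1, F x = ∫ t in Ioi 0, 2 * t / (t ^ 2 + 1) ^ 2 * F (t ^ 2 / (t ^ 2 + 1)) := by
  rw [← image_sq_div_sq_add_one_Ioi, integral_image_eq_integral_abs_deriv_smul
    measurableSet_Ioi (fun t _ => (hasDerivAt_sq_div_sq_add_one t).hasDerivWithinAt)
    (strictMonoOn_sq_div_sq_add_one.injOn.mono Ioi_subset_Ici_self)]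
  refine setIntegral_congr_fun measurableSet_Ioi (fun t ht => ?_)
  simp only [abs_deriv_sq_div_sq_add_one ht, smul_eq_mul]

lemma beta_integrand_comp_sq_div_sq_add_one {t : ℝ} (ht : 0 < t) (u v : ℝ) :
    2 * t / (t ^ 2 + 1) ^ 2 *
        ((t ^ 2 / (t ^ 2 + 1)) ^ (u - 1) * (1 - t ^ 2 / (t ^ 2 + 1)) ^ (v - 1))
      = 2 * (t ^ (2 * u - 1) / (t ^ 2 + 1) ^ (u + v)) := by
  have hs : 0 < t ^ 2 + 1 := by positivity
  have h1 : 1 - t ^ 2 / (t ^ 2 + 1) = (t ^ 2 + 1)⁻¹ := by field_simp; ring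
  have h2 : (t ^ 2) ^ (u - 1) = t ^ (2 * u - 2) := by
    rw [← rpow_natCast, ← rpow_mul ht.le]; push_cast; ring_nf
  have h3 : t ^ (2 * u - 1) = t ^ (2 * u - 2) * t := by
    rw [← rpow_add_one ht.ne']; ring_nf
  have h4 : (t ^ 2 + 1) ^ (u + v)
      = (t ^ 2 + 1) ^ (u - 1) * (t ^ 2 + 1) ^ (v - 1) * (t ^ 2 + 1) ^ 2 := by
    rw [← rpow_add hs, ← rpow_two (t ^ 2 + 1), ← rpow_add hs]; ring_nf
  rw [h1, div_rpow (by positivity) hs.le, inv_rpow hs.le, h2, h3, h4]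
  have hu : 0 < (t ^ 2 + 1) ^ (u - 1) := rpow_pos_of_pos hs _
  have hv : 0 < (t ^ 2 + 1) ^ (v - 1) := rpow_pos_of_pos hs _
  field_simp

lemma integrableOn_rpow_div_sq_add_one_rpow {u v : ℝ} (hu : 0 < u) (hv : 0 < v) :
    IntegrableOn (fun t : ℝ => t ^ (2 * u - 1) / (t ^ 2 + 1) ^ (u + v)) (Ioi 0) := by
  have hB := ((intervalIntegrable_rpow_mul_one_sub_rpow hu hv).1.mono_set Ioo_subset_Ioc_self)
  rw [integrableOn_Ioo_iff_comp_sq_div_sq_add_one] at hB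
  exact (integrable_const_mul_iff (IsUnit.mk0 2 two_ne_zero) _).1 <|
    hB.congr_fun (fun t ht => beta_integrand_comp_sq_div_sq_add_one ht u v) measurableSet_Ioi

theorem integral_rpow_div_sq_add_one_rpow {u v : ℝ} (hu : 0 < u) (hv : 0 < v) :
    ∫ t in Ioi (0 : ℝ), t ^ (2 * u - 1) / (t ^ 2 + 1) ^ (u + v)
      = Gamma u * Gamma v / Gamma (u + v) / 2 := by
  rw [← integral_rpow_mul_one_sub_rpow hu hv, intervalIntegral.integral_of_le zero_le_one,
    integral_Ioc_eq_integral_Ioo, integral_Ioo_eq_integral_comp_sq_div_sq_add_one,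
    setIntegral_congr_fun measurableSet_Ioi
      (fun t ht => beta_integrand_comp_sq_div_sq_add_one ht u v), integral_const_mul]
  ring

theorem coulson_f_integral (α : ℝ) (h1 : -1 < α) (h2 : α < 1) :
    IntegrableOn (fun t : ℝ => t ^ α / (t ^ 2 + 1)) (Ioi 0) ∧
    ∫ t in Ioi (0 : ℝ), t ^ α / (t ^ 2 + 1) = π / (2 * Real.cos (α * π / 2)) := by
  obtain ⟨u, rfl⟩ : ∃ u, α = 2 * u - 1 := ⟨(1 + α) / 2, by ring⟩
  have hu : 0 < u := by linarith
  have hv : 0 < 1 - u := by linarith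
  have hfun : (fun t : ℝ => t ^ (2 * u - 1) / (t ^ 2 + 1) ^ (u + (1 - u)))
      = fun t => t ^ (2 * u - 1) / (t ^ 2 + 1) := by
    simp only [add_sub_cancel, rpow_one]
  have hsin : sin (π * u) = cos ((2 * u - 1) * π / 2) := by
    rw [show π * u = (2 * u - 1) * π / 2 + π / 2 by ring, sin_add_pi_div_two]
  refine ⟨hfun ▸ integrableOn_rpow_div_sq_add_one_rpow hu hv, ?_⟩
  rw [← hfun, integral_rpow_div_sq_add_one_rpow hu hv, add_sub_cancel, Gamma_one,
    Gamma_mul_Gamma_one_sub, hsin]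
  ring
end

section
/- Let λ₁, …, λ_n be nonnegative real numbers, not all zero, let φ(x) = ∏_{j=1}^n (x - λ_j)(x + λ_j), and let 0 < p < 2. Then 2·∑_{j=1}^n λ_j^p = (2 sin(pπ/2)/π) · ∫₀^∞ z^(p-1) · (2n - iz·φ'(iz)/φ(iz)) dz, where the integrand is interpreted as the real number ∑_{j=1}^n 2λ_j² z^(p-1)/(z² + λ_j²). -/
open Real MeasureTheory Set

/-!
Scaling `z = λ x` turns the `j`-th summand of the integral into
`λ ^ p ∫₀^∞ x ^ (p - 1) · 2 / (1 + x²) dx`. The substitutions `x² = u` and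
`u / (1 + u) = t` reduce this to the Beta integral
`B(a, 1 - a) = Γ(a) Γ(1 - a) = π / sin (π a)` with `a = p / 2`, so each summand
contributes `λ ^ p · π / sin (p π / 2)`.
-/

theorem integral_Ioo_rpow_mul_one_sub_rpow_neg {a : ℝ} (ha0 : 0 < a) (ha1 : a < 1) :
    ∫ x in Ioo (0 : ℝ) 1, x ^ (a - 1) * (1 - x) ^ (-a) = π / sin (π * a) := by
  have hGamma := Complex.Gamma_mul_Gamma_eq_betaIntegral (s := a) (t := 1 - a)
    (by simpa using ha0) (by simpa using ha1)
  rw [Complex.Gamma_mul_Gamma_one_sub, add_sub_cancel, Complex.Gamma_one, one_mul,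
    Complex.betaIntegral] at hGamma
  have hofReal : ∀ x ∈ uIcc (0 : ℝ) 1,
      (x : ℂ) ^ ((a : ℂ) - 1) * (1 - (x : ℂ)) ^ (1 - (a : ℂ) - 1)
        = ((x ^ (a - 1) * (1 - x) ^ (-a) : ℝ) : ℂ) := by
    intro x hx
    rw [uIcc_of_le zero_le_one] at hx
    rw [Complex.ofReal_mul, Complex.ofReal_cpow hx.1, Complex.ofReal_cpow (sub_nonneg.2 hx.2)]
    push_cast
    ring_nf
  rw [intervalIntegral.integral_congr hofReal, intervalIntegral.integral_ofReal,
    ← Complex.ofReal_mul, ← Complex.ofReal_sin, ← Complex.ofReal_div, Complex.ofReal_inj,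
    intervalIntegral.integral_of_le zero_le_one, integral_Ioc_eq_integral_Ioo] at hGamma
  exact hGamma.symm

theorem image_div_one_add_Ioi : (fun u : ℝ ↦ u / (1 + u)) '' Ioi 0 = Ioo 0 1 := by
  ext y
  constructor
  · rintro ⟨u, hu, rfl⟩
    have h1u : (0 : ℝ) < 1 + u := by linarith [mem_Ioi.1 hu]
    exact ⟨div_pos hu h1u, (div_lt_one h1u).2 (by linarith)⟩
  · rintro ⟨hy0, hy1⟩
    refine ⟨y / (1 - y), div_pos hy0 (by linarith), ?_⟩
    have : 1 - y ≠ 0 := by linarith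
    field_simp
    ring

theorem injOn_div_one_add_Ioi : InjOn (fun u : ℝ ↦ u / (1 + u)) (Ioi 0) := by
  intro u hu v hv h
  rw [mem_Ioi] at hu hv
  rw [div_eq_div_iff (by positivity) (by positivity)] at h
  linarith

theorem hasDerivAt_div_one_add {u : ℝ} (hu : 1 + u ≠ 0) :
    HasDerivAt (fun u : ℝ ↦ u / (1 + u)) ((1 + u) ^ 2)⁻¹ u := by
  refine ((hasDerivAt_id' u).div ((hasDerivAt_id' u).const_add 1) hu).congr_deriv ?_
  field_simp
  ring

theorem integral_Ioi_rpow_div_one_add {a : ℝ} (ha0 : 0 < a) (ha1 : a < 1) :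
    ∫ u in Ioi (0 : ℝ), u ^ (a - 1) / (1 + u) = π / sin (π * a) := by
  have hsubst := integral_image_eq_integral_abs_deriv_smul measurableSet_Ioi
    (fun u hu ↦ (hasDerivAt_div_one_add (by linarith [mem_Ioi.1 hu])).hasDerivWithinAt)
    injOn_div_one_add_Ioi (fun x : ℝ ↦ x ^ (a - 1) * (1 - x) ^ (-a))
  rw [image_div_one_add_Ioi, integral_Ioo_rpow_mul_one_sub_rpow_neg ha0 ha1] at hsubst
  rw [hsubst]
  refine setIntegral_congr_fun measurableSet_Ioi fun u hu ↦ ?_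
  have h1u : 0 < 1 + u := by linarith [mem_Ioi.1 hu]
  have hsub : 1 - u / (1 + u) = (1 + u)⁻¹ := by field_simp; ring
  rw [smul_eq_mul, abs_of_pos (by positivity), hsub, div_rpow (le_of_lt hu) h1u.le,
    inv_rpow h1u.le, ← rpow_neg h1u.le, neg_neg, rpow_sub_one h1u.ne' a]
  have : 0 < (1 + u) ^ a := by positivity
  field_simp

theorem integral_Ioi_rpow_div_one_add_sq {s : ℝ} (hs0 : 0 < s) (hs2 : s < 2) :
    ∫ t in Ioi (0 : ℝ), t ^ (s - 1) / (1 + t ^ 2) = π / sin (π * s / 2) / 2 := by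
  have hsubst := integral_comp_rpow_Ioi_of_pos (g := fun u : ℝ ↦ u ^ (s / 2 - 1) / (1 + u))
    two_pos
  rw [integral_Ioi_rpow_div_one_add (by linarith) (by linarith), ← mul_div_assoc] at hsubst
  rw [← hsubst, eq_div_iff two_ne_zero, ← integral_mul_const]
  refine setIntegral_congr_fun measurableSet_Ioi fun t ht ↦ ?_
  have ht : 0 < t := ht
  rw [smul_eq_mul, ← rpow_mul ht.le, mul_assoc, ← mul_div_assoc, ← rpow_add ht, rpow_two]
  ring_nf

theorem sin_pi_mul_div_two_pos {p : ℝ} (hp0 : 0 < p) (hp2 : p < 2) : 0 < sin (π * p / 2) :=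
  sin_pos_of_pos_of_lt_pi (by positivity) (by nlinarith [pi_pos])

theorem integral_Ioi_rpow_mul_two_sq_div_sq_add_sq {p l : ℝ} (hp0 : 0 < p) (hp2 : p < 2)
    (hl : 0 ≤ l) :
    ∫ z in Ioi (0 : ℝ), z ^ (p - 1) * (2 * l ^ 2 / (z ^ 2 + l ^ 2))
      = l ^ p * (π / sin (π * p / 2)) := by
  rcases hl.eq_or_lt with rfl | hl
  · simp [zero_rpow hp0.ne']
  have hscaling := integral_comp_mul_left_Ioi'
    (fun z ↦ z ^ (p - 1) * (2 * l ^ 2 / (z ^ 2 + l ^ 2))) 0 hl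
  rw [mul_zero, smul_eq_mul] at hscaling
  rw [← hscaling]
  have hscale : ∀ x ∈ Ioi (0 : ℝ), (l * x) ^ (p - 1) * (2 * l ^ 2 / ((l * x) ^ 2 + l ^ 2))
      = 2 * l ^ (p - 1) * (x ^ (p - 1) / (1 + x ^ 2)) := by
    intro x hx
    rw [mul_rpow hl.le (le_of_lt hx)]
    field_simp
    ring
  rw [setIntegral_congr_fun measurableSet_Ioi hscale, integral_const_mul,
    integral_Ioi_rpow_div_one_add_sq hp0 hp2, rpow_sub_one hl.ne']
  field_simp

theorem integrableOn_Ioi_rpow_mul_two_sq_div_sq_add_sq {p l : ℝ} (hp0 : 0 < p) (hp2 : p < 2)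
    (hl : 0 ≤ l) :
    IntegrableOn (fun z : ℝ ↦ z ^ (p - 1) * (2 * l ^ 2 / (z ^ 2 + l ^ 2))) (Ioi 0) := by
  rcases hl.eq_or_lt with rfl | hl
  · simp
  -- a non-integrable function has Bochner integral `0`, and this one has a positive integral
  refine Integrable.of_integral_ne_zero ?_
  rw [integral_Ioi_rpow_mul_two_sq_div_sq_add_sq hp0 hp2 hl.le]
  have := sin_pi_mul_div_two_pos hp0 hp2
  positivity

theorem coulson_p_schatten_general (n : ℕ) (lam : Fin n → ℝ) (hlam : ∀ j, 0 ≤ lam j)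
    (p : ℝ) (hp0 : 0 < p) (hp2 : p < 2) :
    2 * ∑ j : Fin n, lam j ^ p =
      (2 * Real.sin (p * π / 2) / π) *
        ∫ z in Ioi (0 : ℝ),
          z ^ (p - 1) * ∑ j : Fin n, 2 * (lam j) ^ 2 / (z ^ 2 + (lam j) ^ 2) := by
  have := sin_pi_mul_div_two_pos hp0 hp2
  conv_rhs => enter [2, 2, z]; rw [Finset.mul_sum]
  rw [integral_finsetSum _ fun j _ ↦
      integrableOn_Ioi_rpow_mul_two_sq_div_sq_add_sq hp0 hp2 (hlam j)]
  simp_rw [integral_Ioi_rpow_mul_two_sq_div_sq_add_sq hp0 hp2 (hlam _)]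
  rw [← Finset.sum_mul, mul_comm p π]
  field_simp

theorem coulson_p_schatten (n : ℕ) (lam : Fin n → ℝ) (hlam : ∀ j, 0 ≤ lam j)
    (hne : ∃ j, lam j ≠ 0) (p : ℝ) (hp0 : 0 < p) (hp2 : p < 2) :
    2 * ∑ j : Fin n, lam j ^ p =
      (2 * Real.sin (p * π / 2) / π) *
        ∫ z in Ioi (0 : ℝ),
          z ^ (p - 1) * ∑ j : Fin n, 2 * (lam j) ^ 2 / (z ^ 2 + (lam j) ^ 2) :=
  coulson_p_schatten_general n lam hlam p hp0 hp2
end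

section
/- Let 0 < p < 2 and a > 0. Then a^p = (p sin(pπ/2)/π) · ∫₀^∞ z^(p-1) log((z² + a²)/z²) dz. -/
open Real MeasureTheory Set





lemma integrableOn_of_bounds {f : ℝ → ℝ} (hf : ContinuousOn f (Ioi 0)) {b c C : ℝ}
    (hb : -1 < b) (hc : c < -1) (hC : 0 ≤ C)
    (h1 : ∀ x ∈ Ioc (0:ℝ) 1, |f x| ≤ C * x ^ b)
    (h2 : ∀ x ∈ Ioi (1:ℝ), |f x| ≤ x ^ c) :
    IntegrableOn f (Ioi (0:ℝ)) := by
  rw [← Ioc_union_Ioi_eq_Ioi (zero_le_one (α := ℝ))]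
  refine IntegrableOn.union ?_ ?_
  · have hi : IntegrableOn (fun x : ℝ => C * x ^ b) (Ioc (0:ℝ) 1) :=
      (((intervalIntegrable_iff_integrableOn_Ioc_of_le zero_le_one).1
        (intervalIntegral.intervalIntegrable_rpow' hb))).const_mul C
    refine hi.mono' ((hf.mono Ioc_subset_Ioi_self).aestronglyMeasurable measurableSet_Ioc) ?_
    exact (ae_restrict_iff' measurableSet_Ioc).2 (Filter.Eventually.of_forall
      (fun x hx => by simpa [Real.norm_eq_abs] using h1 x hx))
  · have hi : IntegrableOn (fun x : ℝ => x ^ c) (Ioi (1:ℝ)) :=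
      integrableOn_Ioi_rpow_of_lt hc one_pos
    refine hi.mono' ((hf.mono (Ioi_subset_Ioi zero_le_one)).aestronglyMeasurable
      measurableSet_Ioi) ?_
    exact (ae_restrict_iff' measurableSet_Ioi).2 (Filter.Eventually.of_forall
      (fun x hx => by simpa [Real.norm_eq_abs] using h2 x hx))

lemma contOn_rpow (r : ℝ) : ContinuousOn (fun x : ℝ => x ^ r) (Ioi (0:ℝ)) :=
  fun x hx => ((Real.continuousAt_rpow_const x r (Or.inl (ne_of_gt hx)))).continuousWithinAt

lemma integrableOn_beta {s : ℝ} (h0 : 0 < s) (h1 : s < 1) :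
    IntegrableOn (fun x : ℝ => x ^ (s-1) / (1+x)) (Ioi (0:ℝ)) := by
  refine integrableOn_of_bounds ?_ (b := s-1) (c := s-2) (C := 1) (by linarith) (by linarith)
    zero_le_one ?_ ?_
  · exact (contOn_rpow (s-1)).div
      (continuous_const.add continuous_id).continuousOn
      (fun x hx => by have : (0:ℝ) < x := hx; positivity)
  · intro x hx
    have hx0 : (0:ℝ) < x := hx.1
    have hxp : (0:ℝ) < x ^ (s-1) := rpow_pos_of_pos hx0 _
    rw [abs_of_nonneg (by positivity), one_mul]
    exact div_le_self hxp.le (by linarith)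
  · intro x hx
    have hx1 : (1:ℝ) < x := hx
    have hx0 : (0:ℝ) < x := lt_trans one_pos hx1
    have hxp : (0:ℝ) < x ^ (s-1) := rpow_pos_of_pos hx0 _
    rw [abs_of_nonneg (by positivity)]
    have : x ^ (s-2) = x ^ (s-1) / x := by
      rw [eq_div_iff hx0.ne', ← Real.rpow_add_one hx0.ne']
      congr 1; ring
    rw [this]
    exact div_le_div_of_nonneg_left hxp.le hx0 (by linarith)

lemma integrableOn_N {p t : ℝ} (h0 : 0 < p) (h2 : p < 2) (ht : 0 < t) :
    IntegrableOn (fun z : ℝ => z ^ (p-1) / (z^2 + t)) (Ioi (0:ℝ)) := by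
  refine integrableOn_of_bounds ?_ (b := p-1) (c := p-3) (C := t⁻¹) (by linarith) (by linarith)
    (by positivity) ?_ ?_
  · exact (contOn_rpow (p-1)).div
      (continuous_pow 2 |>.add continuous_const).continuousOn
      (fun x hx => by have : (0:ℝ) < x := hx; positivity)
  · intro x hx
    have hx0 : (0:ℝ) < x := hx.1
    have hxp : (0:ℝ) < x ^ (p-1) := rpow_pos_of_pos hx0 _
    rw [abs_of_nonneg (by positivity), mul_comm t⁻¹ _, ← div_eq_mul_inv]
    exact div_le_div_of_nonneg_left hxp.le ht (by nlinarith [sq_nonneg x])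
  · intro x hx
    have hx1 : (1:ℝ) < x := hx
    have hx0 : (0:ℝ) < x := lt_trans one_pos hx1
    have hxp : (0:ℝ) < x ^ (p-1) := rpow_pos_of_pos hx0 _
    rw [abs_of_nonneg (by positivity)]
    have hsq : x ^ (p-3) = x ^ (p-1) / x^2 := by
      rw [eq_div_iff (by positivity), ← Real.rpow_natCast x 2, ← Real.rpow_add hx0]
      congr 1; push_cast; ring
    rw [hsq]
    exact div_le_div_of_nonneg_left hxp.le (by positivity) (by nlinarith)




set_option maxHeartbeats 1000000

lemma integral_beta' {s : ℝ} (h0 : 0 < s) (h1 : s < 1)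
    (hib : IntegrableOn (fun x : ℝ => x ^ (s-1) / (1+x)) (Ioi (0:ℝ))) :
    ∫ x in Ioi (0:ℝ), x ^ (s-1) / (1+x) = π / Real.sin (π * s) := by
  have hΓs := Real.Gamma_pos_of_pos h0
  have hΓ1s := Real.Gamma_pos_of_pos (by linarith : (0:ℝ) < 1 - s)
  have key : ∫⁻ x in Ioi (0:ℝ), ENNReal.ofReal (x ^ (s-1) / (1+x))
      = ENNReal.ofReal (Real.Gamma s * Real.Gamma (1-s)) := by
    have step1 : ∫⁻ x in Ioi (0:ℝ), ENNReal.ofReal (x ^ (s-1) / (1+x))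
        = ∫⁻ x in Ioi (0:ℝ), ∫⁻ y in Ioi (0:ℝ),
            ENNReal.ofReal (x ^ (s-1) * Real.exp (-((1+x)*y))) := by
      refine setLIntegral_congr_fun measurableSet_Ioi (
        fun x hx => ?_)
      have hx0 : (0:ℝ) < x := hx
      have h1x : (0:ℝ) < 1 + x := by linarith
      have hint : IntegrableOn (fun y : ℝ => Real.exp (-((1+x)*y))) (Ioi (0:ℝ)) := by
        simpa only [neg_mul] using exp_neg_integrableOn_Ioi 0 h1x
      have hval : ∫ y in Ioi (0:ℝ), Real.exp (-((1+x)*y)) = (1+x)⁻¹ := by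
        have h := integral_comp_mul_left_Ioi (fun y => Real.exp (-y)) 0 h1x
        simp only [mul_zero, integral_exp_neg_Ioi_zero, smul_eq_mul, mul_one] at h
        exact h
      rw [← MeasureTheory.ofReal_integral_eq_lintegral_ofReal (hint.const_mul _)
        (Filter.Eventually.of_forall fun y =>
          mul_nonneg (Real.rpow_nonneg hx0.le _) (Real.exp_nonneg _))]
      rw [MeasureTheory.integral_const_mul, hval, div_eq_mul_inv]
    have hmeas : AEMeasurable
        (Function.uncurry fun x y : ℝ =>
          ENNReal.ofReal (x ^ (s-1) * Real.exp (-((1+x)*y))))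
        ((volume.restrict (Ioi (0:ℝ))).prod (volume.restrict (Ioi (0:ℝ)))) := by
      apply Measurable.aemeasurable
      show Measurable fun q : ℝ × ℝ =>
        ENNReal.ofReal (q.1 ^ (s-1) * Real.exp (-((1+q.1)*q.2)))
      fun_prop
    have step3 : ∀ y ∈ Ioi (0:ℝ),
        ∫⁻ x in Ioi (0:ℝ), ENNReal.ofReal (x ^ (s-1) * Real.exp (-((1+x)*y)))
          = ENNReal.ofReal (Real.exp (-y) * ((1/y) ^ s * Real.Gamma s)) := by
      intro y hy
      have hy0 : (0:ℝ) < y := hy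
      have hint : IntegrableOn (fun x : ℝ => x ^ (s-1) * Real.exp (-(y*x))) (Ioi (0:ℝ)) := by
        have base : IntegrableOn (fun x : ℝ => Real.exp (-x) * x ^ (s-1)) (Ioi (0:ℝ)) :=
          Real.GammaIntegral_convergent h0
        have h' := (integrableOn_Ioi_comp_mul_left_iff
          (fun x : ℝ => Real.exp (-x) * x ^ (s-1)) 0 hy0).2 (by simpa using base)
        have h'' : IntegrableOn
            (fun x : ℝ => y ^ (1-s) * (Real.exp (-(y*x)) * (y*x) ^ (s-1))) (Ioi (0:ℝ)) :=
          h'.const_mul (y ^ (1-s))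
        refine IntegrableOn.congr_fun h'' (fun x hx => ?_) measurableSet_Ioi
        have hx0 : (0:ℝ) < x := hx
        have hyy : y ^ (1-s) * y ^ (s-1) = 1 := by
          rw [← Real.rpow_add hy0]; norm_num
        show y ^ (1-s) * (Real.exp (-(y*x)) * (y*x) ^ (s-1)) = x ^ (s-1) * Real.exp (-(y*x))
        rw [Real.mul_rpow hy0.le hx0.le]
        calc y ^ (1-s) * (Real.exp (-(y*x)) * (y ^ (s-1) * x ^ (s-1)))
            = (y ^ (1-s) * y ^ (s-1)) * (x ^ (s-1) * Real.exp (-(y*x))) := by ring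
          _ = x ^ (s-1) * Real.exp (-(y*x)) := by rw [hyy, one_mul]
      have heq : ∀ x ∈ Ioi (0:ℝ), ENNReal.ofReal (x ^ (s-1) * Real.exp (-((1+x)*y)))
          = ENNReal.ofReal (Real.exp (-y) * (x ^ (s-1) * Real.exp (-(y*x)))) := by
        intro x hx
        congr 1
        rw [show -((1+x)*y) = -y + -(y*x) by ring, Real.exp_add]; ring
      rw [setLIntegral_congr_fun measurableSet_Ioi heq]
      rw [← MeasureTheory.ofReal_integral_eq_lintegral_ofReal (hint.const_mul _)
        ((ae_restrict_iff' measurableSet_Ioi).2 (Filter.Eventually.of_forall fun x hx =>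
          mul_nonneg (Real.exp_nonneg _)
            (mul_nonneg (Real.rpow_nonneg (le_of_lt hx) _) (Real.exp_nonneg _))))]
      rw [MeasureTheory.integral_const_mul, Real.integral_rpow_mul_exp_neg_mul_Ioi h0 hy0]
    have step4 : ∫⁻ y in Ioi (0:ℝ),
        ENNReal.ofReal (Real.exp (-y) * ((1/y) ^ s * Real.Gamma s))
          = ENNReal.ofReal (Real.Gamma s * Real.Gamma (1-s)) := by
      have heq : ∀ y ∈ Ioi (0:ℝ), ENNReal.ofReal (Real.exp (-y) * ((1/y) ^ s * Real.Gamma s))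
          = ENNReal.ofReal (Real.Gamma s * (y ^ ((1-s)-1) * Real.exp (-(1*y)))) := by
        intro y hy
        have hy0 : (0:ℝ) < y := hy
        congr 1
        have h1 : (1/y) ^ s = y ^ ((1-s)-1) := by
          rw [one_div, Real.inv_rpow hy0.le, ← Real.rpow_neg hy0.le]
          congr 1; ring
        rw [h1, one_mul]; ring
      have hint2 : IntegrableOn (fun y : ℝ => y ^ ((1-s)-1) * Real.exp (-(1*y)))
          (Ioi (0:ℝ)) := by
        have base : IntegrableOn (fun x : ℝ => Real.exp (-x) * x ^ ((1-s)-1)) (Ioi (0:ℝ)) :=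
          Real.GammaIntegral_convergent (by linarith)
        refine base.congr_fun ?_ measurableSet_Ioi
        intro x _; simp [mul_comm]
      rw [setLIntegral_congr_fun measurableSet_Ioi heq]
      rw [← MeasureTheory.ofReal_integral_eq_lintegral_ofReal (hint2.const_mul _)
        ((ae_restrict_iff' measurableSet_Ioi).2 (Filter.Eventually.of_forall fun y hy =>
          mul_nonneg hΓs.le (mul_nonneg (Real.rpow_nonneg (le_of_lt hy) _)
            (Real.exp_nonneg _))))]
      rw [MeasureTheory.integral_const_mul,
        Real.integral_rpow_mul_exp_neg_mul_Ioi (by linarith : (0:ℝ) < 1 - s) one_pos]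
      norm_num
    rw [step1, lintegral_lintegral_swap hmeas,
      setLIntegral_congr_fun measurableSet_Ioi step3, step4]
  have hnn : 0 ≤ᵐ[volume.restrict (Ioi (0:ℝ))] fun x : ℝ => x ^ (s-1) / (1+x) :=
    (ae_restrict_iff' measurableSet_Ioi).2 (Filter.Eventually.of_forall fun x hx =>
      div_nonneg (Real.rpow_nonneg (le_of_lt hx) _)
        (by have : (0:ℝ) < x := hx; positivity))
  rw [MeasureTheory.integral_eq_lintegral_of_nonneg_ae hnn hib.1, key,
    ENNReal.toReal_ofReal (by positivity), Real.Gamma_mul_Gamma_one_sub]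

lemma integral_N {p : ℝ} (h0 : 0 < p) (h2 : p < 2) :
    ∫ z in Ioi (0:ℝ), z ^ (p-1) / (1 + z^2) = π / (2 * Real.sin (π * (p/2))) := by
  have hbeta := integral_beta' (s := p/2) (by linarith) (by linarith)
    (integrableOn_beta (by linarith) (by linarith))
  have hsub := integral_comp_rpow_Ioi_of_pos
    (g := fun y : ℝ => y ^ (p/2-1) / (1+y)) (p := (2:ℝ)) two_pos
  rw [hbeta] at hsub
  have hcong : ∀ x ∈ Ioi (0:ℝ),
      ((2:ℝ) * x ^ ((2:ℝ)-1)) • ((x ^ (2:ℝ)) ^ (p/2-1) / (1 + x ^ (2:ℝ)))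
        = 2 * (x ^ (p-1) / (1 + x^2)) := by
    intro x hx
    have hx0 : (0:ℝ) < x := hx
    have e1 : x ^ ((2:ℝ)-1) * (x ^ (2:ℝ)) ^ (p/2-1) = x ^ (p-1) := by
      rw [← Real.rpow_mul hx0.le, ← Real.rpow_add hx0]; congr 1; ring
    have e2 : x ^ (2:ℝ) = x ^ 2 := by
      rw [← Real.rpow_natCast x 2]; norm_num
    rw [smul_eq_mul, ← e2, ← e1]; ring
  rw [setIntegral_congr_fun measurableSet_Ioi hcong, MeasureTheory.integral_const_mul] at hsub
  have hπ : (0:ℝ) < Real.sin (π * (p/2)) := by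
    apply Real.sin_pos_of_pos_of_lt_pi
    · positivity
    · nlinarith [Real.pi_pos]
  rw [eq_div_iff hπ.ne'] at hsub
  rw [eq_div_iff (by positivity : (2:ℝ) * Real.sin (π * (p/2)) ≠ 0)]
  linear_combination hsub

lemma integral_Nt {p t : ℝ} (h0 : 0 < p) (h2 : p < 2) (ht : 0 < t) :
    ∫ z in Ioi (0:ℝ), z ^ (p-1) / (z^2 + t)
      = t ^ (p/2-1) * (π / (2 * Real.sin (π * (p/2)))) := by
  set r := t ^ ((1:ℝ)/2) with hrdef
  have hr : 0 < r := Real.rpow_pos_of_pos ht _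
  have hr2 : r ^ 2 = t := by
    rw [hrdef, ← Real.rpow_natCast (t ^ ((1:ℝ)/2)) 2, ← Real.rpow_mul ht.le]; norm_num
  have hsub := integral_comp_mul_left_Ioi (fun z : ℝ => z ^ (p-1) / (z^2+t)) 0 hr
  simp only [mul_zero, smul_eq_mul] at hsub
  have hcong : ∀ x ∈ Ioi (0:ℝ),
      (r*x) ^ (p-1) / ((r*x)^2+t) = r ^ (p-3) * (x ^ (p-1) / (1+x^2)) := by
    intro x hx
    have hx0 : (0:ℝ) < x := hx
    have h1 : (r*x)^(p-1) = r^(p-1) * x^(p-1) := Real.mul_rpow hr.le hx0.le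
    have h2' : (r*x)^2 + t = r^2 * (1+x^2) := by rw [mul_pow, ← hr2]; ring
    have h3 : r ^ (p-1) = r^(p-3) * r^2 := by
      rw [← Real.rpow_natCast r 2, ← Real.rpow_add hr]; congr 1; push_cast; ring
    have hr2' : (r:ℝ) ^ 2 ≠ 0 := by positivity
    have hx2' : (1:ℝ) + x^2 ≠ 0 := by positivity
    rw [h1, h2', h3]
    field_simp
  rw [setIntegral_congr_fun measurableSet_Ioi hcong, MeasureTheory.integral_const_mul,
    integral_N h0 h2] at hsub
  have h5 : r * r ^ (p-3) = t ^ (p/2-1) := by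
    nth_rewrite 1 [show r = r ^ (1:ℝ) by rw [Real.rpow_one]]
    rw [← Real.rpow_add hr, hrdef, ← Real.rpow_mul ht.le]
    congr 1; ring
  have hI : ∫ z in Ioi (0:ℝ), z ^ (p-1) / (z^2 + t)
      = r * (r ^ (p-3) * (π / (2 * Real.sin (π * (p/2))))) := by
    rw [hsub, ← mul_assoc, mul_inv_cancel₀ hr.ne', one_mul]
  rw [hI, ← mul_assoc, h5]

set_option maxHeartbeats 1000000 in
theorem coulson_jacobs_single (p a : ℝ) (hp0 : 0 < p) (hp2 : p < 2) (ha : 0 < a) :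
    a ^ p = (p * Real.sin (p * π / 2) / π) *
      ∫ z in Ioi (0 : ℝ), z ^ (p - 1) * Real.log ((z ^ 2 + a ^ 2) / z ^ 2) := by
  have hπ := Real.pi_pos
  have hsin : 0 < Real.sin (π * (p/2)) := by
    apply Real.sin_pos_of_pos_of_lt_pi
    · positivity
    · nlinarith
  set N : ℝ := π / (2 * Real.sin (π * (p/2))) with hN
  have hN0 : 0 < N := by positivity
  have ha2 : (0:ℝ) < a^2 := by positivity
  have key : ∫⁻ z in Ioi (0:ℝ),
        ENNReal.ofReal (z ^ (p-1) * Real.log ((z^2 + a^2) / z^2))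
      = ENNReal.ofReal (a ^ p * (2/p) * N) := by
    have step1 : ∫⁻ z in Ioi (0:ℝ),
          ENNReal.ofReal (z ^ (p-1) * Real.log ((z^2 + a^2) / z^2))
        = ∫⁻ z in Ioi (0:ℝ), ∫⁻ t in Ioo (0:ℝ) (a^2),
            ENNReal.ofReal (z ^ (p-1) * (z^2 + t)⁻¹) := by
      refine setLIntegral_congr_fun measurableSet_Ioi (
        fun z hz => ?_)
      have hz0 : (0:ℝ) < z := hz
      have hz2 : (0:ℝ) < z^2 := by positivity
      have hival : ∫ t in Ioo (0:ℝ) (a^2), (z^2 + t)⁻¹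
          = Real.log ((z^2 + a^2) / z^2) := by
        rw [← MeasureTheory.integral_Ioc_eq_integral_Ioo,
          ← intervalIntegral.integral_of_le ha2.le,
          intervalIntegral.integral_comp_add_left (fun y : ℝ => y⁻¹) (z^2),
          add_zero, integral_inv (notMem_uIcc_of_lt hz2 (by positivity))]
      have hint : IntegrableOn (fun t : ℝ => (z^2 + t)⁻¹) (Ioo (0:ℝ) (a^2)) := by
        refine (ContinuousOn.integrableOn_compact isCompact_Icc ?_).mono_set
          Ioo_subset_Icc_self
        refine (continuous_const.add continuous_id).continuousOn.inv₀ ?_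
        intro t ht
        have h1 : (0:ℝ) ≤ t := ht.1
        exact (by positivity : (0:ℝ) < z^2 + t).ne'
      rw [show z ^ (p-1) * Real.log ((z^2+a^2)/z^2)
            = ∫ t in Ioo (0:ℝ) (a^2), z ^ (p-1) * (z^2+t)⁻¹ by
          rw [MeasureTheory.integral_const_mul, hival]]
      rw [MeasureTheory.ofReal_integral_eq_lintegral_ofReal (hint.const_mul _)
        ((ae_restrict_iff' measurableSet_Ioo).2 (Filter.Eventually.of_forall
          fun t ht => mul_nonneg (Real.rpow_nonneg hz0.le _)
            (inv_nonneg.2 (by nlinarith [ht.1]))))]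
    have hmeas : AEMeasurable
        (Function.uncurry fun z t : ℝ => ENNReal.ofReal (z ^ (p-1) * (z^2 + t)⁻¹))
        ((volume.restrict (Ioi (0:ℝ))).prod (volume.restrict (Ioo (0:ℝ) (a^2)))) := by
      apply Measurable.aemeasurable
      show Measurable fun q : ℝ × ℝ => ENNReal.ofReal (q.1 ^ (p-1) * (q.1^2 + q.2)⁻¹)
      fun_prop
    have step3 : ∀ t ∈ Ioo (0:ℝ) (a^2),
        ∫⁻ z in Ioi (0:ℝ), ENNReal.ofReal (z ^ (p-1) * (z^2 + t)⁻¹)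
          = ENNReal.ofReal (t ^ (p/2-1) * N) := by
      intro t ht
      have ht0 : (0:ℝ) < t := ht.1
      have hi := integrableOn_N hp0 hp2 ht0
      simp only [div_eq_mul_inv] at hi
      rw [← MeasureTheory.ofReal_integral_eq_lintegral_ofReal hi
        ((ae_restrict_iff' measurableSet_Ioi).2 (Filter.Eventually.of_forall
          fun z hz => mul_nonneg (Real.rpow_nonneg (le_of_lt hz) _)
            (inv_nonneg.2 (by nlinarith [sq_nonneg z]))))]
      congr 1
      rw [show (fun z : ℝ => z ^ (p-1) * (z^2+t)⁻¹) = fun z : ℝ => z ^ (p-1) / (z^2+t)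
          from funext fun z => (div_eq_mul_inv _ _).symm]
      exact integral_Nt hp0 hp2 ht0
    have step4 : ∫⁻ t in Ioo (0:ℝ) (a^2), ENNReal.ofReal (t ^ (p/2-1) * N)
        = ENNReal.ofReal (a ^ p * (2/p) * N) := by
      have hint4 : IntegrableOn (fun t : ℝ => t ^ (p/2-1) * N) (Ioo (0:ℝ) (a^2)) :=
        ((((intervalIntegrable_iff_integrableOn_Ioc_of_le ha2.le).1
          (intervalIntegral.intervalIntegrable_rpow' (by linarith))).mono_set
            Ioo_subset_Ioc_self)).mul_const N
      rw [← MeasureTheory.ofReal_integral_eq_lintegral_ofReal hint4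
        ((ae_restrict_iff' measurableSet_Ioo).2 (Filter.Eventually.of_forall
          fun t ht => mul_nonneg (Real.rpow_nonneg ht.1.le _) hN0.le))]
      congr 1
      rw [MeasureTheory.integral_mul_const]
      have hpow : ∫ t in Ioo (0:ℝ) (a^2), t ^ (p/2-1) = a ^ p * (2/p) := by
        rw [← MeasureTheory.integral_Ioc_eq_integral_Ioo,
          ← intervalIntegral.integral_of_le ha2.le,
          integral_rpow (Or.inl (by linarith : (-1:ℝ) < p/2-1))]
        rw [Real.zero_rpow (by intro h; nlinarith [h] : p/2-1+1 ≠ 0)]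
        have h2 : (a^2:ℝ) ^ (p/2-1+1) = a ^ p := by
          rw [← Real.rpow_natCast a 2, ← Real.rpow_mul ha.le]
          congr 1; push_cast; ring
        rw [h2]
        field_simp
        rw [sub_zero, show p - 2 + 2 = p by ring, mul_div_assoc, div_self hp0.ne', mul_one]
      rw [hpow]
    rw [step1, lintegral_lintegral_swap hmeas,
      setLIntegral_congr_fun measurableSet_Ioo step3, step4]
  have hnn : 0 ≤ᵐ[volume.restrict (Ioi (0:ℝ))]
      fun z : ℝ => z ^ (p-1) * Real.log ((z^2 + a^2) / z^2) :=
    (ae_restrict_iff' measurableSet_Ioi).2 (Filter.Eventually.of_forall fun z hz =>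
      mul_nonneg (Real.rpow_nonneg (le_of_lt hz) _)
        (Real.log_nonneg (by
          have hz0 : (0:ℝ) < z := hz
          rw [le_div_iff₀ (by positivity)]
          nlinarith [sq_nonneg a])))
  have hmes : AEStronglyMeasurable
      (fun z : ℝ => z ^ (p-1) * Real.log ((z^2 + a^2) / z^2))
      (volume.restrict (Ioi (0:ℝ))) := by
    refine ContinuousOn.aestronglyMeasurable ?_ measurableSet_Ioi
    refine (contOn_rpow (p-1)).mul (ContinuousOn.log ?_ ?_)
    · exact ContinuousOn.div (by fun_prop) (by fun_prop)
        (fun z hz => by have : (0:ℝ) < z := hz; positivity)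
    · intro z hz
      have : (0:ℝ) < z := hz
      positivity
  rw [MeasureTheory.integral_eq_lintegral_of_nonneg_ae hnn hmes, key,
    ENNReal.toReal_ofReal (by positivity)]
  have hS : Real.sin (p * π / 2) = Real.sin (π * (p/2)) := by rw [show p*π/2 = π*(p/2) by ring]
  rw [hS, hN]
  generalize hgen : Real.sin (π * (p / 2)) = S at hsin ⊢
  field_simp [hp0.ne', hπ.ne', hsin.ne']
end

section
/- Monotonicity of p-energy under the quasi-order: let λ₁,…,λ_n and μ₁,…,μ_n be nonnegative reals such that for all real z ≥ 0, ∏_j (z² + λ_j²) ≤ ∏_j (z² + μ_j²). Then for every p with 0 < p < 2, ∑_j λ_j^p ≤ ∑_j μ_j^p. -/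
/-! For `a ≥ 0` and `0 < s < 1` the substitution `t = a u` gives
`∫₀^∞ log (1 + a / t) t^(s-1) dt = a^s C(s)` with `C(s) = logMellin 1 s > 0`.
Summing over a family `a_j` turns `∑ a_j^s` into `C(s)⁻¹ ∫₀^∞ log ∏ (1 + a_j / t) t^(s-1) dt`,
which is monotone in the products `∏ (t + a_j)`. Apply this with `a_j = λ_j²`, `s = p / 2`
and `t = z²`. -/

open MeasureTheory Set Real

lemma Real.log_one_add_le_rpow_div {x α : ℝ} (hx : 0 ≤ x) (hα : 0 < α) (hα1 : α ≤ 1) :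
    log (1 + x) ≤ x ^ α / α := by
  have hpos : 0 < (1 + x) ^ α := rpow_pos_of_pos (by linarith) α
  rw [le_div_iff₀ hα]
  calc log (1 + x) * α = log ((1 + x) ^ α) := by rw [log_rpow (by linarith), mul_comm]
    _ ≤ (1 + x) ^ α - 1 := log_le_sub_one_of_pos hpos
    _ ≤ 1 ^ α + x ^ α - 1 := by gcongr; exact rpow_add_le_add_rpow zero_le_one hx hα.le hα1
    _ = x ^ α := by rw [one_rpow]; ring

noncomputable def logMellin (a s : ℝ) : ℝ :=
  ∫ t in Ioi 0, log (1 + a / t) * t ^ (s - 1)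

section LogMellin

variable {a s : ℝ}

lemma log_one_add_div_mul_rpow_nonneg (ha : 0 ≤ a) {t : ℝ} (ht : 0 < t) :
    0 ≤ log (1 + a / t) * t ^ (s - 1) :=
  mul_nonneg (log_nonneg (by simp only [le_add_iff_nonneg_right]; positivity))
    (rpow_nonneg ht.le _)

lemma log_one_add_div_mul_rpow_le (ha : 0 ≤ a) {t α : ℝ} (ht : 0 < t) (hα : 0 < α)
    (hα1 : α ≤ 1) :
    log (1 + a / t) * t ^ (s - 1) ≤ a ^ α / α * t ^ (s - 1 - α) :=
  calc log (1 + a / t) * t ^ (s - 1) ≤ (a / t) ^ α / α * t ^ (s - 1) := by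
        gcongr
        exact log_one_add_le_rpow_div (by positivity) hα hα1
    _ = a ^ α / α * t ^ (s - 1 - α) := by
        rw [div_rpow ha ht.le, sub_eq_neg_add (s - 1), rpow_add ht, rpow_neg ht.le]
        ring

lemma integrableOn_log_one_add_div_mul_rpow (ha : 0 ≤ a) (hs0 : 0 < s) (hs1 : s < 1) :
    IntegrableOn (fun t ↦ log (1 + a / t) * t ^ (s - 1)) (Ioi 0) := by
  have hmeas : AEStronglyMeasurable (fun t : ℝ ↦ log (1 + a / t) * t ^ (s - 1)) := by fun_prop
  have dominated {u : Set ℝ} (hu : MeasurableSet u) (hu0 : u ⊆ Ioi 0) {α : ℝ} (hα : 0 < α)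
      (hα1 : α ≤ 1) (hint : IntegrableOn (fun t : ℝ ↦ t ^ (s - 1 - α)) u) :
      IntegrableOn (fun t ↦ log (1 + a / t) * t ^ (s - 1)) u := by
    refine (hint.const_mul (a ^ α / α)).mono' hmeas.restrict ?_
    filter_upwards [ae_restrict_mem hu] with t ht
    rw [norm_of_nonneg (log_one_add_div_mul_rpow_nonneg ha (hu0 ht))]
    exact log_one_add_div_mul_rpow_le ha (hu0 ht) hα hα1
  rw [← Ioc_union_Ioi_eq_Ioi zero_le_one]
  refine .union (dominated measurableSet_Ioc Ioc_subset_Ioi_self (half_pos hs0) (by linarith)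
    ?_) (dominated measurableSet_Ioi (Ioi_subset_Ioi zero_le_one) one_pos le_rfl ?_)
  · rw [integrableOn_Ioc_iff_integrableOn_Ioo, intervalIntegral.integrableOn_Ioo_rpow_iff one_pos]
    linarith
  · exact integrableOn_Ioi_rpow_of_lt (by linarith) one_pos

lemma logMellin_one_pos (hs0 : 0 < s) (hs1 : s < 1) : 0 < logMellin 1 s := by
  rw [logMellin, setIntegral_pos_iff_support_of_nonneg_ae
    ((ae_restrict_mem measurableSet_Ioi).mono fun t ht ↦
      log_one_add_div_mul_rpow_nonneg zero_le_one ht)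
    (integrableOn_log_one_add_div_mul_rpow zero_le_one hs0 hs1)]
  have hsupp : Function.support (fun t : ℝ ↦ log (1 + 1 / t) * t ^ (s - 1)) ∩ Ioi 0 = Ioi 0 := by
    refine inter_eq_right.mpr fun t (ht : 0 < t) ↦ (mul_pos ?_ (rpow_pos_of_pos ht _)).ne'
    exact log_pos (by simp only [lt_add_iff_pos_right]; positivity)
  rw [hsupp, Real.volume_Ioi]
  exact ENNReal.zero_lt_top

lemma logMellin_eq_rpow_mul (ha : 0 ≤ a) (hs0 : 0 < s) :
    logMellin a s = a ^ s * logMellin 1 s := by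
  rcases ha.eq_or_lt with rfl | ha
  · simp [logMellin, zero_rpow hs0.ne']
  have hscale := integral_comp_mul_left_Ioi (fun t ↦ log (1 + a / t) * t ^ (s - 1)) 0 ha
  have hsubst : ∀ u ∈ Ioi (0 : ℝ), log (1 + a / (a * u)) * (a * u) ^ (s - 1)
      = a ^ (s - 1) * (log (1 + 1 / u) * u ^ (s - 1)) := fun u (hu : 0 < u) ↦ by
    rw [div_mul_cancel_left₀ ha.ne', mul_rpow ha.le hu.le, one_div]
    ring
  rw [mul_zero, setIntegral_congr_fun measurableSet_Ioi hsubst, integral_const_mul,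
    smul_eq_mul, ← logMellin, ← logMellin] at hscale
  calc logMellin a s = a * (a⁻¹ * logMellin a s) := by field_simp
    _ = a ^ s * logMellin 1 s := by rw [← hscale, rpow_sub_one ha.ne']; field_simp

end LogMellin

section Monotonicity

variable {ι : Type*} [Fintype ι] {a b : ι → ℝ} {s : ℝ}

lemma sum_rpow_mul_logMellin_one (ha : ∀ i, 0 ≤ a i) (hs0 : 0 < s) (hs1 : s < 1) :
    (∑ i, a i ^ s) * logMellin 1 s = ∫ t in Ioi 0, ∑ i, log (1 + a i / t) * t ^ (s - 1) := by
  rw [integral_finsetSum _ fun i _ ↦ integrableOn_log_one_add_div_mul_rpow (ha i) hs0 hs1,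
    Finset.sum_mul]
  exact Finset.sum_congr rfl fun i _ ↦ (logMellin_eq_rpow_mul (ha i) hs0).symm

lemma prod_one_add_div_le_of_prod_add_le {t : ℝ} (h : ∏ i, (t + a i) ≤ ∏ i, (t + b i))
    (ht : 0 < t) :
    ∏ i, (1 + a i / t) ≤ ∏ i, (1 + b i / t) := by
  have hdiv (c : ι → ℝ) : ∏ i, (1 + c i / t) = (∏ i, (t + c i)) / t ^ Fintype.card ι := by
    simp_rw [one_add_div ht.ne', Finset.prod_div_distrib, Finset.prod_const, Finset.card_univ]
  rw [hdiv, hdiv]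
  gcongr

theorem sum_rpow_le_sum_rpow_of_prod_add_le (ha : ∀ i, 0 ≤ a i) (hb : ∀ i, 0 ≤ b i)
    (h : ∀ t, 0 < t → ∏ i, (t + a i) ≤ ∏ i, (t + b i)) (hs0 : 0 < s) (hs1 : s < 1) :
    ∑ i, a i ^ s ≤ ∑ i, b i ^ s := by
  have hint (c : ι → ℝ) (hc : ∀ i, 0 ≤ c i) :=
    integrable_finsetSum Finset.univ fun i _ ↦
      integrableOn_log_one_add_div_mul_rpow (hc i) hs0 hs1
  refine le_of_mul_le_mul_right ?_ (logMellin_one_pos hs0 hs1)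
  rw [sum_rpow_mul_logMellin_one ha hs0 hs1, sum_rpow_mul_logMellin_one hb hs0 hs1]
  refine setIntegral_mono_on (hint a ha) (hint b hb) measurableSet_Ioi fun t (ht : 0 < t) ↦ ?_
  have hpos (c : ι → ℝ) (hc : ∀ i, 0 ≤ c i) (i : ι) : 1 + c i / t ≠ 0 := by
    have := hc i; positivity
  rw [← Finset.sum_mul, ← Finset.sum_mul, ← log_prod fun i _ ↦ hpos a ha i,
    ← log_prod fun i _ ↦ hpos b hb i]
  refine mul_le_mul_of_nonneg_right (log_le_log ?_ ?_) (rpow_nonneg ht.le _)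
  · exact Finset.prod_pos fun i _ ↦ by have := ha i; positivity
  · exact prod_one_add_div_le_of_prod_add_le (h t ht) ht

end Monotonicity

theorem p_energy_monotone_quasi_order (n : ℕ) (lam mu : Fin n → ℝ)
    (hlam : ∀ j, 0 ≤ lam j) (hmu : ∀ j, 0 ≤ mu j)
    (h : ∀ z : ℝ, 0 ≤ z →
      ∏ j : Fin n, (z ^ 2 + (lam j) ^ 2) ≤ ∏ j : Fin n, (z ^ 2 + (mu j) ^ 2))
    (p : ℝ) (hp0 : 0 < p) (hp2 : p < 2) :
    ∑ j : Fin n, lam j ^ p ≤ ∑ j : Fin n, mu j ^ p := by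
  have hsq {x : ℝ} (hx : 0 ≤ x) : (x ^ 2) ^ (p / 2) = x ^ p := by
    rw [← rpow_natCast, ← rpow_mul hx, Nat.cast_ofNat, mul_div_cancel₀ p two_ne_zero]
  have hprod (t : ℝ) (ht : 0 < t) := sq_sqrt ht.le ▸ h (√t) (sqrt_nonneg t)
  have := sum_rpow_le_sum_rpow_of_prod_add_le (fun j ↦ sq_nonneg (lam j))
    (fun j ↦ sq_nonneg (mu j)) hprod (half_pos hp0) (by linarith)
  simpa only [hsq (hlam _), hsq (hmu _)] using this
end

section
/- Let λ₁,…,λ_n and μ₁,…,μ_n be nonnegative reals, and suppose e_k(λ₁²,…,λ_n²) ≤ e_k(μ₁²,…,μ_n²) for every k (elementary symmetric polynomials). Then for every p with 0 < p < 2, ∑_j λ_j^p ≤ ∑_j μ_j^p. -/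
open MeasureTheory Real Set

lemma contOn_aux (q : ℝ) : ContinuousOn (fun s : ℝ => Real.log (1 + s) * s ^ (-q - 1)) (Ioi 0) := by
  intro x hx
  have hx0 : (0:ℝ) < x := hx
  apply ContinuousAt.continuousWithinAt
  have h1 : ContinuousAt (fun s : ℝ => Real.log (1 + s)) x := by
    exact (Real.continuousAt_log (by positivity)).comp (by fun_prop)
  exact h1.mul (Real.continuousAt_rpow_const x _ (Or.inl hx0.ne'))

lemma integrable_aux {q : ℝ} (hq0 : 0 < q) (hq1 : q < 1) :
    IntegrableOn (fun s : ℝ => Real.log (1 + s) * s ^ (-q - 1)) (Ioi (0:ℝ)) := by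
  have hIoi : Ioc (0:ℝ) 1 ∪ Ioi 1 = Ioi 0 := Set.Ioc_union_Ioi_eq_Ioi zero_le_one
  rw [← hIoi]
  apply IntegrableOn.union
  · -- on Ioc 0 1, dominate by s^(-q)
    have hg : IntegrableOn (fun s : ℝ => s ^ (-q)) (Ioc (0:ℝ) 1) := by
      rw [integrableOn_Ioc_iff_integrableOn_Ioo]
      exact (intervalIntegral.integrableOn_Ioo_rpow_iff zero_lt_one).mpr (by linarith)
    refine hg.mono' (((contOn_aux q).mono Ioc_subset_Ioi_self).aestronglyMeasurable measurableSet_Ioc) ?_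
    rw [ae_restrict_iff' measurableSet_Ioc]
    filter_upwards with s hs
    have hs0 : (0:ℝ) < s := hs.1
    have hlog0 : 0 ≤ Real.log (1 + s) := Real.log_nonneg (by linarith)
    have hlog : Real.log (1 + s) ≤ s := by
      have := Real.log_le_sub_one_of_pos (show (0:ℝ) < 1 + s by linarith)
      linarith
    have hr : (0:ℝ) ≤ s ^ (-q - 1) := Real.rpow_nonneg hs0.le _
    rw [Real.norm_eq_abs, abs_of_nonneg (mul_nonneg hlog0 hr)]
    calc Real.log (1 + s) * s ^ (-q - 1) ≤ s * s ^ (-q - 1) := by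
          exact mul_le_mul_of_nonneg_right hlog hr
      _ = s ^ (1:ℝ) * s ^ (-q - 1) := by rw [Real.rpow_one]
      _ = s ^ (-q) := by rw [← Real.rpow_add hs0]; norm_num
  · -- on Ioi 1, dominate by C * s^(-q/2-1)
    have hg : IntegrableOn (fun s : ℝ => (2 ^ (q/2) / (q/2)) * s ^ (-(q/2) - 1)) (Ioi (1:ℝ)) :=
      (integrableOn_Ioi_rpow_of_lt (by linarith) zero_lt_one).const_mul _
    refine hg.mono' (((contOn_aux q).mono (Ioi_subset_Ioi zero_le_one)).aestronglyMeasurable measurableSet_Ioi) ?_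
    rw [ae_restrict_iff' measurableSet_Ioi]
    filter_upwards with s hs
    have hs1 : (1:ℝ) < s := hs
    have hs0 : (0:ℝ) < s := by linarith
    have hlog0 : 0 ≤ Real.log (1 + s) := Real.log_nonneg (by linarith)
    have hr : (0:ℝ) ≤ s ^ (-q - 1) := Real.rpow_nonneg hs0.le _
    rw [Real.norm_eq_abs, abs_of_nonneg (mul_nonneg hlog0 hr)]
    have hlog : Real.log (1 + s) ≤ 2 ^ (q/2) * s ^ (q/2) / (q/2) := by
      have h1 : Real.log (1 + s) ≤ (1 + s) ^ (q/2) / (q/2) :=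
        Real.log_le_rpow_div (by linarith) (by linarith)
      have h2 : (1 + s) ^ (q/2) ≤ (2 * s) ^ (q/2) :=
        Real.rpow_le_rpow (by linarith) (by linarith) (by linarith)
      have h3 : (2 * s : ℝ) ^ (q/2) = 2 ^ (q/2) * s ^ (q/2) :=
        Real.mul_rpow (by norm_num) hs0.le
      calc Real.log (1 + s) ≤ (1 + s) ^ (q/2) / (q/2) := h1
        _ ≤ (2 * s) ^ (q/2) / (q/2) := by
            apply div_le_div_of_nonneg_right h2 (by linarith) |>.trans_eq rfl
        _ = 2 ^ (q/2) * s ^ (q/2) / (q/2) := by rw [h3]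
    calc Real.log (1 + s) * s ^ (-q - 1)
        ≤ (2 ^ (q/2) * s ^ (q/2) / (q/2)) * s ^ (-q - 1) := mul_le_mul_of_nonneg_right hlog hr
      _ = (2 ^ (q/2) / (q/2)) * (s ^ (q/2) * s ^ (-q - 1)) := by ring
      _ = (2 ^ (q/2) / (q/2)) * s ^ (-(q/2) - 1) := by
          rw [← Real.rpow_add hs0]; ring_nf
lemma integrable_scaled' {q : ℝ} (hq0 : 0 < q) (hq1 : q < 1)
    (hbase : IntegrableOn (fun s : ℝ => Real.log (1 + s) * s ^ (-q - 1)) (Ioi (0:ℝ)))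
    {a : ℝ} (ha : 0 ≤ a) :
    IntegrableOn (fun s : ℝ => Real.log (1 + a * s) * s ^ (-q - 1)) (Ioi (0:ℝ)) := by
  rcases eq_or_lt_of_le ha with rfl | ha'
  · simpa using integrableOn_zero (s := Ioi (0:ℝ)) (μ := volume)
  · have hcomp : IntegrableOn (fun s : ℝ => Real.log (1 + a * s) * (a * s) ^ (-q - 1)) (Ioi (0:ℝ)) := by
      have := (integrableOn_Ioi_comp_mul_left_iff
        (fun x : ℝ => Real.log (1 + x) * x ^ (-q - 1)) 0 ha')
      rw [mul_zero] at this
      exact this.mpr hbase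
    have h2 := (hcomp.const_mul (a ^ (q + 1)))
    refine IntegrableOn.congr_fun h2 (fun s hs => ?_) measurableSet_Ioi
    have hs0 : (0:ℝ) < s := hs
    rw [Real.mul_rpow ha'.le hs0.le]
    rw [show a ^ (q+1) * (Real.log (1 + a*s) * (a ^ (-q-1) * s ^ (-q-1)))
        = (a ^ (q+1) * a ^ (-q-1)) * (Real.log (1 + a*s) * s ^ (-q-1)) by ring,
      ← Real.rpow_add ha']
    norm_num

lemma scale_eq {q : ℝ} (hq0 : 0 < q) (hq1 : q < 1)
    {a : ℝ} (ha : 0 ≤ a) :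
    (∫ s in Ioi (0:ℝ), Real.log (1 + a * s) * s ^ (-q - 1)) =
      a ^ q * ∫ s in Ioi (0:ℝ), Real.log (1 + s) * s ^ (-q - 1) := by
  rcases eq_or_lt_of_le ha with rfl | ha'
  · simp [Real.zero_rpow hq0.ne']
  · have key := integral_comp_mul_left_Ioi
      (fun x : ℝ => Real.log (1 + x) * x ^ (-q - 1)) 0 ha'
    rw [mul_zero] at key
    have congr1 : (∫ s in Ioi (0:ℝ), Real.log (1 + a * s) * s ^ (-q - 1))
        = ∫ s in Ioi (0:ℝ), a ^ (q+1) * (Real.log (1 + a * s) * (a * s) ^ (-q - 1)) := by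
      refine setIntegral_congr_fun measurableSet_Ioi (fun s hs => ?_)
      have hs0 : (0:ℝ) < s := hs
      rw [Real.mul_rpow ha'.le hs0.le,
        show a ^ (q+1) * (Real.log (1 + a*s) * (a ^ (-q-1) * s ^ (-q-1)))
          = (a ^ (q+1) * a ^ (-q-1)) * (Real.log (1 + a*s) * s ^ (-q-1)) by ring,
        ← Real.rpow_add ha']
      norm_num
    rw [congr1, integral_const_mul, key, smul_eq_mul, ← mul_assoc]
    congr 1
    rw [← Real.rpow_neg_one a, ← Real.rpow_add ha']
    ring_nf


lemma Jc_pos {q : ℝ} (hq0 : 0 < q) (hq1 : q < 1)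
    (hbase : IntegrableOn (fun s : ℝ => Real.log (1 + s) * s ^ (-q - 1)) (Ioi (0:ℝ))) :
    0 < ∫ s in Ioi (0:ℝ), Real.log (1 + s) * s ^ (-q - 1) := by
  have hsub : Ioc (1:ℝ) 2 ⊆ Ioi 0 := fun x hx => lt_trans zero_lt_one hx.1
  have hnonneg : 0 ≤ᵐ[volume.restrict (Ioi (0:ℝ))]
      fun s : ℝ => Real.log (1 + s) * s ^ (-q - 1) := by
    rw [Filter.EventuallyLE, ae_restrict_iff' measurableSet_Ioi]
    filter_upwards with s hs
    simp only [Pi.zero_apply]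
    have hs0 : (0:ℝ) < s := hs
    exact mul_nonneg (Real.log_nonneg (by linarith)) (Real.rpow_nonneg hs0.le _)
  have hmono : (∫ s in Ioc (1:ℝ) 2, Real.log (1 + s) * s ^ (-q - 1)) ≤
      ∫ s in Ioi (0:ℝ), Real.log (1 + s) * s ^ (-q - 1) :=
    setIntegral_mono_set hbase hnonneg (HasSubset.Subset.eventuallyLE hsub)
  refine lt_of_lt_of_le ?_ hmono
  have hconst : Real.log 2 * 2 ^ (-q - 1) * (volume (Ioc (1:ℝ) 2)).toReal ≤
      ∫ s in Ioc (1:ℝ) 2, Real.log (1 + s) * s ^ (-q - 1) := by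
    apply setIntegral_ge_of_const_le_real measurableSet_Ioc (by simp)
    · intro s hs
      have hs1 : (1:ℝ) < s := hs.1
      have hs2 : s ≤ 2 := hs.2
      have h1 : Real.log 2 ≤ Real.log (1 + s) :=
        Real.log_le_log (by norm_num) (by linarith)
      have h2 : (2:ℝ) ^ (-q - 1) ≤ s ^ (-q - 1) :=
        Real.rpow_le_rpow_of_nonpos (by linarith) hs2 (by linarith)
      exact mul_le_mul h1 h2 (Real.rpow_nonneg (by norm_num) _)
        (Real.log_nonneg (by linarith))
    · exact hbase.mono_set hsub
  refine lt_of_lt_of_le ?_ hconst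
  have : (volume (Ioc (1:ℝ) 2)).toReal = 1 := by
    simp [Real.volume_Ioc]; norm_num
  rw [this, mul_one]
  exact mul_pos (Real.log_pos (by norm_num)) (Real.rpow_pos_of_pos (by norm_num) _)

lemma prod_expand (n : ℕ) (x : Fin n → ℝ) (t : ℝ) :
    ∏ j : Fin n, (1 + x j ^ 2 * t) =
      ∑ k ∈ Finset.range (n+1), t ^ k *
        ∑ S ∈ Finset.powersetCard k (Finset.univ : Finset (Fin n)), ∏ j ∈ S, x j ^ 2 := by
  have h1 : ∏ j : Fin n, (1 + x j ^ 2 * t) = ∏ j : Fin n, (x j ^ 2 * t + 1) := by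
    exact Finset.prod_congr rfl fun j _ => add_comm _ _
  rw [h1, Finset.prod_add]
  rw [Finset.powerset_card_biUnion,
    Finset.sum_biUnion (fun i _ j _ hij => Finset.pairwise_disjoint_powersetCard _ hij), Finset.card_univ, Fintype.card_fin]
  refine Finset.sum_congr rfl fun k hk => ?_
  rw [Finset.mul_sum]
  refine Finset.sum_congr rfl fun S hS => ?_
  rw [Finset.prod_mul_distrib, Finset.prod_const, Finset.prod_const_one, mul_one,
    (Finset.mem_powersetCard.1 hS).2]
  ring

theorem p_energy_monotone_esymm (n : ℕ) (lam mu : Fin n → ℝ)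
    (hlam : ∀ j, 0 ≤ lam j) (hmu : ∀ j, 0 ≤ mu j)
    (h : ∀ k : ℕ,
      ∑ S ∈ Finset.powersetCard k (Finset.univ : Finset (Fin n)), ∏ j ∈ S, (lam j) ^ 2 ≤
      ∑ S ∈ Finset.powersetCard k (Finset.univ : Finset (Fin n)), ∏ j ∈ S, (mu j) ^ 2)
    (p : ℝ) (hp0 : 0 < p) (hp2 : p < 2) :
    ∑ j : Fin n, lam j ^ p ≤ ∑ j : Fin n, mu j ^ p := by
  set q : ℝ := p / 2 with hq
  have hq0 : 0 < q := by positivity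
  have hq1 : q < 1 := by rw [hq]; linarith
  have hbase := integrable_aux hq0 hq1
  set c : ℝ := ∫ s in Ioi (0:ℝ), Real.log (1 + s) * s ^ (-q - 1) with hc
  have hcpos : 0 < c := Jc_pos hq0 hq1 hbase
  have hint : ∀ (x : Fin n → ℝ) (j : Fin n),
      IntegrableOn (fun s : ℝ => Real.log (1 + x j ^ 2 * s) * s ^ (-q - 1)) (Ioi (0:ℝ)) :=
    fun x j => integrable_scaled' hq0 hq1 hbase (sq_nonneg _)
  have hval : ∀ (x : Fin n → ℝ), (∀ j, 0 ≤ x j) → ∀ j : Fin n,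
      (∫ s in Ioi (0:ℝ), Real.log (1 + x j ^ 2 * s) * s ^ (-q - 1)) = x j ^ p * c := by
    intro x hx j
    rw [scale_eq hq0 hq1 (sq_nonneg (x j))]
    congr 1
    rw [← Real.rpow_natCast (x j) 2, ← Real.rpow_mul (hx j)]
    norm_num [hq]
    rw [show (2:ℝ) * (p/2) = p by ring]
  have hsum : ∀ (x : Fin n → ℝ), (∀ j, 0 ≤ x j) →
      (∫ s in Ioi (0:ℝ), ∑ j : Fin n, Real.log (1 + x j ^ 2 * s) * s ^ (-q - 1)) =
        (∑ j : Fin n, x j ^ p) * c := by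
    intro x hx
    rw [integral_finset_sum _ (fun j _ => hint x j), Finset.sum_mul]
    exact Finset.sum_congr rfl fun j _ => hval x hx j
  have hmono : (∫ s in Ioi (0:ℝ), ∑ j : Fin n, Real.log (1 + lam j ^ 2 * s) * s ^ (-q - 1)) ≤
      ∫ s in Ioi (0:ℝ), ∑ j : Fin n, Real.log (1 + mu j ^ 2 * s) * s ^ (-q - 1) := by
    refine setIntegral_mono_on (integrable_finset_sum _ (fun j _ => hint lam j))
      (integrable_finset_sum _ (fun j _ => hint mu j)) measurableSet_Ioi ?_
    intro s hs
    have hs0 : (0:ℝ) < s := hs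
    rw [← Finset.sum_mul, ← Finset.sum_mul]
    refine mul_le_mul_of_nonneg_right ?_ (Real.rpow_nonneg hs0.le _)
    have hposl : ∀ j : Fin n, (0:ℝ) < 1 + lam j ^ 2 * s := fun j => by
      have := mul_nonneg (sq_nonneg (lam j)) hs0.le; linarith
    have hposr : ∀ j : Fin n, (0:ℝ) < 1 + mu j ^ 2 * s := fun j => by
      have := mul_nonneg (sq_nonneg (mu j)) hs0.le; linarith
    rw [← Real.log_prod (s := Finset.univ) (fun j _ => (hposl j).ne'),
      ← Real.log_prod (s := Finset.univ) (fun j _ => (hposr j).ne')]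
    refine Real.log_le_log (Finset.prod_pos fun j _ => hposl j) ?_
    rw [prod_expand, prod_expand]
    exact Finset.sum_le_sum fun k _ =>
      mul_le_mul_of_nonneg_left (h k) (pow_nonneg hs0.le k)
  rw [hsum lam hlam, hsum mu hmu] at hmono
  exact le_of_mul_le_mul_right hmono hcpos
end

section
/- For every integer n ≥ 2 and every real p with 0 < p < 2, the star satisfies 𝓔_p(S_n) ≤ 𝓔_p(P_n), i.e., 2(n-1)^(p/2) ≤ ∑_{j=1}^n |2cos(jπ/(n+1))|^p. -/
open Real

private lemma my_rpow_add_le_add_rpow {x y t : ℝ} (hx : 0 ≤ x) (hy : 0 ≤ y)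
    (ht0 : 0 ≤ t) (ht1 : t ≤ 1) : (x + y) ^ t ≤ x ^ t + y ^ t := by
  have h := NNReal.rpow_add_le_add_rpow x.toNNReal y.toNNReal ht0 ht1
  rw [← NNReal.coe_le_coe] at h
  push_cast at h
  rwa [Real.coe_toNNReal x hx, Real.coe_toNNReal y hy] at h

private lemma my_sum_rpow_ge {ι : Type*} (s : Finset ι) (f : ι → ℝ) (hf : ∀ i ∈ s, 0 ≤ f i)
    {t : ℝ} (ht0 : 0 < t) (ht1 : t ≤ 1) : (∑ i ∈ s, f i) ^ t ≤ ∑ i ∈ s, f i ^ t := by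
  induction s using Finset.cons_induction with
  | empty => simp [Real.zero_rpow ht0.ne']
  | cons a s ha ih =>
    rw [Finset.sum_cons, Finset.sum_cons]
    have hfa : 0 ≤ f a := hf a (Finset.mem_cons_self a s)
    have hs : ∀ i ∈ s, 0 ≤ f i := fun i hi => hf i (Finset.mem_cons_of_mem hi)
    have hsum : 0 ≤ ∑ i ∈ s, f i := Finset.sum_nonneg hs
    calc (f a + ∑ i ∈ s, f i) ^ t ≤ (f a) ^ t + (∑ i ∈ s, f i) ^ t :=
          my_rpow_add_le_add_rpow hfa hsum ht0.le ht1
      _ ≤ (f a) ^ t + ∑ i ∈ s, f i ^ t := add_le_add_right (ih hs) _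

theorem star_le_path_p_energy (n : ℕ) (hn : 2 ≤ n) (p : ℝ) (hp0 : 0 < p) (hp2 : p < 2) :
    2 * ((n : ℝ) - 1) ^ (p / 2) ≤
      ∑ j ∈ Finset.Icc 1 n, |2 * Real.cos (j * π / (n + 1))| ^ p := by
  set θ : ℝ := π / (n + 1) with hθ
  have hn1 : (0:ℝ) < (n:ℝ) + 1 := by positivity
  have hθpos : 0 < θ := by positivity
  have hθlt : θ < π := by
    rw [hθ, div_lt_iff₀ hn1]
    have h1 : (1:ℝ) < (n:ℝ)+1 := by
      have : (2:ℝ) ≤ n := by exact_mod_cast hn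
      linarith
    nlinarith [Real.pi_pos]
  have hsinθ : 0 < Real.sin θ := Real.sin_pos_of_pos_of_lt_pi hθpos hθlt
  set m : ℕ := n / 2 with hm
  have hm1 : 1 ≤ m := Nat.one_le_div_iff (by norm_num) |>.2 hn
  have h2m : 2 * m ≤ n := by omega
  have hn2m : n ≤ 2 * m + 1 := by omega
  -- angle identity
  have hangle : ∀ j : ℕ, (j:ℝ) * π / (n + 1) = j * θ := fun j => by
    rw [hθ]; ring
  -- (2 cos x)^2 = 2 + 2 cos (2x)
  have hsq : ∀ x : ℝ, (2 * Real.cos x)^2 = 2 + 2 * Real.cos (2*x) := by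
    intro x
    have := Real.cos_sq x
    nlinarith [this]
  -- telescoping
  have key : ∀ i : ℕ, 2 * Real.sin θ * Real.cos ((2*(i:ℝ)+2)*θ)
      = Real.sin ((2*((i:ℝ)+1)+1) * θ) - Real.sin ((2*(i:ℝ)+1)*θ) := by
    intro i
    rw [Real.sin_sub_sin]
    congr 1
    · congr 1; ring
    · ring
  have tel := Finset.sum_range_sub (fun i : ℕ => Real.sin ((2*(i:ℝ)+1) * θ)) m
  have hcos_sum : ∑ i ∈ Finset.range m, Real.cos ((2*(i:ℝ)+2)*θ)
      = (Real.sin ((2*(m:ℝ)+1)*θ) - Real.sin θ) / (2 * Real.sin θ) := by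
    rw [eq_div_iff (by positivity)]
    have : ∑ i ∈ Finset.range m, (2 * Real.sin θ * Real.cos ((2*(i:ℝ)+2)*θ))
        = Real.sin ((2*(m:ℝ)+1)*θ) - Real.sin θ := by
      simp_rw [key]
      push_cast at tel
      simpa using tel
    rw [← this, Finset.sum_mul]
    congr 1; ext i; ring
  -- value of sin((2m+1)θ)
  have hc : Real.sin ((2*(m:ℝ)+1)*θ) = if n = 2*m then 0 else Real.sin θ := by
    rcases eq_or_ne n (2*m) with h | h
    · rw [if_pos h]
      have : (2*(m:ℝ)+1)*θ = π := by
        rw [hθ]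
        have : ((n:ℝ)) = 2*m := by exact_mod_cast h
        field_simp [this]
        linarith
      rw [this, Real.sin_pi]
    · rw [if_neg h]
      have hn' : n = 2*m+1 := by omega
      have : (2*(m:ℝ)+1)*θ = π - θ := by
        rw [hθ]
        have : ((n:ℝ)) = 2*m+1 := by exact_mod_cast hn'
        field_simp [this]
        linarith
      rw [this, Real.sin_pi_sub]
  -- sum of squares over half interval
  have hA : ∑ j ∈ Finset.Icc 1 m, (2 * Real.cos (j * θ))^2 = (n:ℝ) - 1 := by
    have hIcc : Finset.Icc 1 m = Finset.Ico 1 (m+1) := by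
      rw [Finset.Ico_add_one_right_eq_Icc]
    rw [hIcc, Finset.sum_Ico_eq_sum_range]
    simp only [Nat.add_sub_cancel]
    have hterm : ∀ i : ℕ, (2 * Real.cos (((1+i:ℕ):ℝ) * θ))^2
        = 2 + 2 * Real.cos ((2*(i:ℝ)+2)*θ) := by
      intro i
      rw [hsq]
      push_cast
      congr 2
      ring
    rw [Finset.sum_congr rfl (fun i _ => hterm i)]
    rw [Finset.sum_add_distrib, Finset.sum_const, Finset.card_range, ← Finset.mul_sum,
      hcos_sum, hc]
    rcases eq_or_ne n (2*m) with h | h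
    · rw [if_pos h]
      have : ((n:ℝ)) = 2*m := by exact_mod_cast h
      field_simp [this]
      rw [this]; ring
    · rw [if_neg h]
      have hn' : n = 2*m+1 := by omega
      have : ((n:ℝ)) = 2*m+1 := by exact_mod_cast hn'
      field_simp [this]
      simp only [nsmul_eq_mul]; linarith
  -- the summand function
  set F : ℕ → ℝ := fun j => |2 * Real.cos (j * π / (n + 1))| ^ p with hF
  have hFnonneg : ∀ j : ℕ, 0 ≤ F j := fun j => Real.rpow_nonneg (abs_nonneg _) p
  -- reflection
  have hrefl : ∑ j ∈ Finset.Icc (n+1-m) n, F j = ∑ j ∈ Finset.Icc 1 m, F j := by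
    refine Finset.sum_nbij' (fun j => n+1-j) (fun j => n+1-j) ?_ ?_ ?_ ?_ ?_
    · intro a ha
      simp only [Finset.mem_Icc] at ha ⊢
      omega
    · intro a ha
      simp only [Finset.mem_Icc] at ha ⊢
      omega
    · intro a ha
      simp only [Finset.mem_Icc] at ha
      show n+1-(n+1-a) = a
      omega
    · intro a ha
      simp only [Finset.mem_Icc] at ha
      show n+1-(n+1-a) = a
      omega
    · intro a ha
      simp only [Finset.mem_Icc] at ha
      have hcast : ((n+1-a : ℕ) : ℝ) = (n:ℝ) + 1 - a := by
        have : a ≤ n + 1 := by omega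
        push_cast [Nat.cast_sub this]
        ring
      rw [hF]
      simp only
      congr 1
      rw [hcast]
      have harg : ((n:ℝ) + 1 - a) * π / (n + 1) = π - (a:ℝ) * π / (n+1) := by
        field_simp
      rw [harg, Real.cos_pi_sub]
      rw [show (2 : ℝ) * -Real.cos ((a:ℝ)*π/(n+1)) = -(2 * Real.cos ((a:ℝ)*π/(n+1))) by ring,
        abs_neg]
  -- rewrite F as a square to apply subadditivity
  have hFsq : ∀ j : ℕ, F j = ((2 * Real.cos (j * θ))^2) ^ (p/2) := by
    intro j
    rw [hF]
    simp only
    rw [hangle j, ← sq_abs, ← Real.rpow_natCast |2 * Real.cos ((j:ℝ) * θ)| 2,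
      ← Real.rpow_mul (abs_nonneg _)]
    congr 1
    push_cast
    ring
  have hsub : ((n:ℝ) - 1) ^ (p/2) ≤ ∑ j ∈ Finset.Icc 1 m, F j := by
    rw [← hA]
    calc (∑ j ∈ Finset.Icc 1 m, (2 * Real.cos (j * θ))^2) ^ (p/2)
        ≤ ∑ j ∈ Finset.Icc 1 m, ((2 * Real.cos (j * θ))^2) ^ (p/2) :=
          my_sum_rpow_ge _ _ (fun i _ => sq_nonneg _) (by positivity) (by linarith)
      _ = ∑ j ∈ Finset.Icc 1 m, F j := by
          exact Finset.sum_congr rfl fun j _ => (hFsq j).symm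
  -- combining
  have hdisj : Disjoint (Finset.Icc 1 m) (Finset.Icc (n+1-m) n) := by
    rw [Finset.disjoint_left]
    intro a ha hb
    simp only [Finset.mem_Icc] at ha hb
    omega
  have hsubset : Finset.Icc 1 m ∪ Finset.Icc (n+1-m) n ⊆ Finset.Icc 1 n := by
    intro a ha
    simp only [Finset.mem_union, Finset.mem_Icc] at ha ⊢
    omega
  have hbig : ∑ j ∈ Finset.Icc 1 m, F j + ∑ j ∈ Finset.Icc (n+1-m) n, F j
      ≤ ∑ j ∈ Finset.Icc 1 n, F j := by
    rw [← Finset.sum_union hdisj]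
    exact Finset.sum_le_sum_of_subset_of_nonneg hsubset fun i _ _ => hFnonneg i
  calc 2 * ((n : ℝ) - 1) ^ (p / 2)
      = ((n : ℝ) - 1) ^ (p / 2) + ((n : ℝ) - 1) ^ (p / 2) := by ring
    _ ≤ ∑ j ∈ Finset.Icc 1 m, F j + ∑ j ∈ Finset.Icc (n+1-m) n, F j := by
        rw [hrefl]; linarith
    _ ≤ ∑ j ∈ Finset.Icc 1 n, F j := hbig
end
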